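/- There is no nontrivial 3-(v,k,1) design D admitting a block-transitive group of automorphisms G with G ≅ A_5 or G ≅ S_5. (Nontrivial means 3 < k < v.) -/

import Mathlib

/-!
Counting the `3`-subsets through a point and through a pair shows that a nontrivial Steiner
system `S(3, k, v)` with at most `40` blocks is `S(3, 4, 8)` or `S(3, 4, 10)`, with `14` or `30`
blocks. On the other hand, an element of order `3` in a block-transitive group `G` acts as a
`3`-cycle on some orbit; the block through that orbit is fixed, so `3 * #𝓑` divides `|G|`. For
`G ≅ A₅` or `S₅` this forces `#𝓑 ∣ 40`, and neither `14` nor `30` divides `40`.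
-/

open Finset MulAction Pointwise

lemma Nat.choose_mul_factorial_eq_descFactorial (n k : ℕ) :
    n.choose k * k.factorial = n.descFactorial k := by
  rw [Nat.descFactorial_eq_factorial_mul_choose, mul_comm]

/-- `l`, `r`, `b` are the numbers of blocks through a pair, through a point and in total of a
Steiner system `S(3, k, v)`. -/
theorem steinerSystem_three_card_blocks_eq_of_le_forty {v k l r b : ℕ} (hk : 3 < k) (hkv : k < v)
    (hl : l * (k - 2) = v - 2) (hr : r * (k - 1).choose 2 = (v - 1).choose 2)
    (hb : b * k.choose 3 = v.choose 3) (hb40 : b ≤ 40) : b = 14 ∨ b = 30 := by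
  obtain ⟨K, rfl⟩ : ∃ K, k = K + 2 := ⟨k - 2, by omega⟩
  obtain rfl : v = l * K + 2 := by rw [Nat.add_sub_cancel] at hl; omega
  have hK : 2 ≤ K := by omega
  have hl2 : 2 ≤ l := by
    by_contra! h
    interval_cases l <;> omega
  have hr' : r * (K + 1) = l * (l * K + 1) := by
    have := congrArg (· * Nat.factorial 2) hr
    simp only [mul_assoc, Nat.choose_mul_factorial_eq_descFactorial, Nat.descFactorial_succ,
      Nat.descFactorial_zero] at this
    apply Nat.eq_of_mul_eq_mul_right (show 0 < K by omega)
    simp only [Nat.add_sub_cancel, Nat.sub_zero, show K + 2 - 1 = K + 1 by omega,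
      show l * K + 2 - 1 = l * K + 1 by omega] at this
    linarith
  have hb' : b * ((K + 2) * (K + 1)) = l * ((l * K + 2) * (l * K + 1)) := by
    have := congrArg (· * Nat.factorial 3) hb
    simp only [mul_assoc, Nat.choose_mul_factorial_eq_descFactorial,
      Nat.descFactorial_succ, Nat.descFactorial_zero] at this
    apply Nat.eq_of_mul_eq_mul_right (show 0 < K by omega)
    simp only [Nat.add_sub_cancel, Nat.sub_zero, show K + 2 - 1 = K + 1 by omega,
      show l * K + 2 - 1 = l * K + 1 by omega] at this
    linarith
  have hl4 : l ≤ 4 := by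
    by_contra! h
    have : 5 * ((5 * K + 2) * (5 * K + 1)) ≤ l * ((l * K + 2) * (l * K + 1)) := by
      gcongr <;> omega
    nlinarith [Nat.mul_le_mul_right ((K + 2) * (K + 1)) hb40]
  -- `r * (K + 1) = l ^ 2 * (K + 1) - (l ^ 2 - l)`, so `r < l ^ 2` and `K + 1 ≤ l ^ 2 - l ≤ 12`.
  have hrl : r < l * l := by nlinarith
  have hK11 : K ≤ 11 := by nlinarith
  interval_cases l <;> interval_cases K <;> omega

theorem Finset.card_mul_card_stabilizer_eq_card {G α : Type*} [Group G] [MulAction G α]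
    {𝓑 : Finset α} {b : α} (hb : b ∈ 𝓑) (hpres : ∀ g : G, ∀ c ∈ 𝓑, g • c ∈ 𝓑)
    (htrans : ∀ c ∈ 𝓑, ∃ g : G, g • b = c) : #𝓑 * Nat.card (stabilizer G b) = Nat.card G := by
  have horbit : orbit G b = 𝓑 := by
    ext c
    exact ⟨by rintro ⟨g, rfl⟩; exact hpres g b hb, fun hc => htrans c hc⟩
  rw [← Set.ncard_coe_finset, ← horbit, ← index_stabilizer, mul_comm, Subgroup.card_mul_index]

section SteinerSystem

variable {P : Type*} [DecidableEq P]

def IsSteinerSystem (t : ℕ) (𝓑 : Finset (Finset P)) : Prop :=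
  ∀ s : Finset P, #s = t → #(𝓑.filter (s ⊆ ·)) = 1

namespace IsSteinerSystem

variable {t : ℕ} {𝓑 : Finset (Finset P)}

theorem exists_mem_superset (hD : IsSteinerSystem t 𝓑) {s : Finset P} (hs : #s = t) :
    ∃ b ∈ 𝓑, s ⊆ b := by
  obtain ⟨b, hb⟩ := card_pos.1 (hD s hs ▸ Nat.one_pos)
  exact ⟨b, (mem_filter.1 hb).1, (mem_filter.1 hb).2⟩

theorem eq_of_superset (hD : IsSteinerSystem t 𝓑) {s b₁ b₂ : Finset P} (hs : #s = t)
    (hb₁ : b₁ ∈ 𝓑) (hb₂ : b₂ ∈ 𝓑) (h₁ : s ⊆ b₁) (h₂ : s ⊆ b₂) : b₁ = b₂ :=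
  card_le_one.1 (hD s hs).le _ (mem_filter.2 ⟨hb₁, h₁⟩) _ (mem_filter.2 ⟨hb₂, h₂⟩)

/-- Double counting of the `t`-sets containing `s`: each lies in exactly one block. -/
theorem card_filter_superset_mul_choose [Fintype P] (hD : IsSteinerSystem t 𝓑) {k : ℕ}
    (hblocks : ∀ b ∈ 𝓑, #b = k) {s : Finset P} (hs : #s ≤ t) :
    #(𝓑.filter (s ⊆ ·)) * (k - #s).choose (t - #s) = (Fintype.card P - #s).choose (t - #s) := by
  have hcover : (univ.powersetCard t).filter (s ⊆ ·) =
      (𝓑.filter (s ⊆ ·)).biUnion (fun b => (b.powersetCard t).filter (s ⊆ ·)) := by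
    ext u
    simp only [mem_filter, mem_powersetCard, mem_biUnion, subset_univ, true_and]
    constructor
    · rintro ⟨hu, hsu⟩
      obtain ⟨b, hb, hub⟩ := hD.exists_mem_superset hu
      exact ⟨b, ⟨hb, hsu.trans hub⟩, ⟨hub, hu⟩, hsu⟩
    · rintro ⟨b, -, ⟨-, hu⟩, hsu⟩
      exact ⟨hu, hsu⟩
  have hdisj : (𝓑.filter (s ⊆ ·) : Set (Finset P)).PairwiseDisjoint
      (fun b => (b.powersetCard t).filter (s ⊆ ·)) := by
    intro b₁ hb₁ b₂ hb₂ hne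
    refine disjoint_left.2 fun u hu₁ hu₂ => hne ?_
    simp only [coe_filter, Set.mem_ofPred_eq, mem_filter, mem_powersetCard] at hb₁ hb₂ hu₁ hu₂
    exact hD.eq_of_superset hu₁.1.2 hb₁.1 hb₂.1 hu₁.1.1 hu₂.1.1
  rw [← card_univ, ← card_filter_powersetCard_subset s univ t (subset_univ s) hs, hcover,
    card_biUnion hdisj, sum_congr rfl fun b hb => ?_, sum_const, smul_eq_mul]
  rw [mem_filter] at hb
  rw [card_filter_powersetCard_subset s b t hb.2 hs, hblocks b hb.1]

variable {G : Type*} [Group G] [MulAction G P]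

/-- `g` permutes the triple `{a, g • a, g • g • a}`, hence fixes the block through it. -/
theorem exists_smul_eq_self_of_pow_three (hD : IsSteinerSystem 3 𝓑) {g : G}
    (hpres : ∀ b ∈ 𝓑, g • b ∈ 𝓑) (hg : g ^ 3 = 1) {a : P} (ha : g • a ≠ a) :
    ∃ b ∈ 𝓑, g • b = b := by
  have hcycle : g • g • g • a = a := by rw [smul_smul, smul_smul, ← pow_three', hg, one_smul]
  have h₂ : g • g • a ≠ a := fun h => ha (by simpa [h] using hcycle)
  have h₁₂ : g • g • a ≠ g • a := fun h => ha (MulAction.injective g h)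
  set s : Finset P := {a, g • a, g • g • a}
  have hs : #s = 3 := by
    rw [card_insert_of_notMem (by simp [ha.symm, h₂.symm]), card_pair h₁₂.symm]
  have hgs : g • s = s := by
    simp only [s, smul_finset_insert, smul_finset_singleton, hcycle]
    ext; simp only [mem_insert, mem_singleton]; tauto
  obtain ⟨b, hb, hsb⟩ := hD.exists_mem_superset hs
  refine ⟨b, hb, hD.eq_of_superset hs (hpres b hb) hb ?_ hsb⟩
  exact hgs ▸ smul_finset_subset_smul_finset hsb

end IsSteinerSystem

theorem IsSteinerSystem.three_mul_card_dvd_card {G : Type*} [Group G] [Finite G]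
    [MulAction G P] [FaithfulSMul G P] {𝓑 : Finset (Finset P)} (hD : IsSteinerSystem 3 𝓑)
    (hpres : ∀ g : G, ∀ b ∈ 𝓑, g • b ∈ 𝓑)
    (htrans : ∀ b₁ ∈ 𝓑, ∀ b₂ ∈ 𝓑, ∃ g : G, g • b₁ = b₂) (h3 : 3 ∣ Nat.card G) :
    3 * #𝓑 ∣ Nat.card G := by
  obtain ⟨g, hg⟩ := exists_prime_orderOf_dvd_card' 3 h3
  obtain ⟨a, ha⟩ : ∃ a : P, g • a ≠ a := by
    by_contra! h
    have : g = 1 := FaithfulSMul.eq_of_smul_eq_smul fun a => by rw [h a, one_smul]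
    simp [this] at hg
  obtain ⟨b, hb, hgb⟩ :=
    hD.exists_smul_eq_self_of_pow_three (hpres g) (hg ▸ pow_orderOf_eq_one g) ha
  have h3stab : 3 ∣ Nat.card (stabilizer G b) := by
    rw [← hg, ← Subgroup.orderOf_mk g (mem_stabilizer_iff.2 hgb)]
    exact orderOf_dvd_natCard _
  rw [← card_mul_card_stabilizer_eq_card hb hpres (htrans b hb), mul_comm]
  exact mul_dvd_mul_left _ h3stab

end SteinerSystem

theorem nat_card_eq_sixty_or_of_mulEquiv {G : Type*} [Group G]
    (hiso : Nonempty (G ≃* alternatingGroup (Fin 5)) ∨ Nonempty (G ≃* Equiv.Perm (Fin 5))) :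
    Nat.card G = 60 ∨ Nat.card G = 120 := by
  rcases hiso with ⟨⟨e⟩⟩ | ⟨⟨e⟩⟩
  · left
    rw [Nat.card_congr e.toEquiv, nat_card_alternatingGroup, Nat.card_fin]
    rfl
  · right
    rw [Nat.card_congr e.toEquiv, Nat.card_perm, Nat.card_fin]
    rfl

/-- There is no nontrivial `3`-`(v,k,1)` design (`3 < k < v`) admitting a
block-transitive group of automorphisms isomorphic to `A₅` or `S₅`. -/
theorem no_block_transitive_design_A5_S5
    (P : Type*) [Fintype P] [DecidableEq P]
    (𝓑 : Finset (Finset P)) (v k : ℕ)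
    (hv : Fintype.card P = v)
    (hk : 3 < k) (hkv : k < v)
    (hblocks : ∀ b ∈ 𝓑, b.card = k)
    (hdesign : ∀ s : Finset P, s.card = 3 →
      (𝓑.filter (fun b => s ⊆ b)).card = 1)
    (G : Type*) [Group G] [MulAction G P] [FaithfulSMul G P]
    (hiso : Nonempty (G ≃* alternatingGroup (Fin 5)) ∨
      Nonempty (G ≃* Equiv.Perm (Fin 5)))
    (hpres : ∀ (g : G), ∀ b ∈ 𝓑, b.image (fun x => g • x) ∈ 𝓑)
    (htrans : ∀ b₁ ∈ 𝓑, ∀ b₂ ∈ 𝓑, ∃ g : G, b₁.image (fun x => g • x) = b₂) :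
    False := by
  have hD : IsSteinerSystem 3 𝓑 := hdesign
  obtain ⟨x, y, hxy⟩ := Fintype.exists_pair_of_one_lt_card (by omega : 1 < Fintype.card P)
  have hb := hD.card_filter_superset_mul_choose hblocks (s := ∅) (by simp)
  have hr := hD.card_filter_superset_mul_choose hblocks (s := {x}) (by simp)
  have hl := hD.card_filter_superset_mul_choose hblocks (s := {x, y}) (by simp [card_pair hxy])
  simp only [card_empty, card_singleton, card_pair hxy, hv, Nat.sub_zero, Nat.reduceSub,
    Nat.choose_one_right, filter_true_of_mem fun _ _ => empty_subset _] at hb hr hl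
  have hG := nat_card_eq_sixty_or_of_mulEquiv hiso
  have : Finite G := Nat.finite_of_card_ne_zero (by omega)
  have h120 : 3 * #𝓑 ∣ 3 * 40 := (hD.three_mul_card_dvd_card hpres htrans (by omega)).trans
    (by rcases hG with h | h <;> simp [h])
  have h40 : #𝓑 ∣ 40 := Nat.dvd_of_mul_dvd_mul_left (by norm_num) h120
  rcases steinerSystem_three_card_blocks_eq_of_le_forty hk hkv hl hr hb
    (Nat.le_of_dvd (by norm_num) h40) with h | h <;> rw [h] at h40 <;> norm_num at h40
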